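/- Let α > 1 be a rational number and let N and γ be positive integers. For every rational number m with 0 ≤ m ≤ N that has granularity γ, there exists a rational number m̃ ∈ Ñ(α, N, γ) such that m ≤ m̃ ≤ m·α. -/
import Mathlib


/-- The rounded set Ñ(α, N, γ) ⊆ ℚ. -/
def roundedSet (α : ℚ) (N γ : ℕ) : Set ℚ :=
  ({q | ∃ j : ℕ, q = (⌈α ^ j⌉ : ℚ) / γ} ∩ Set.Icc 0 (N : ℚ)) ∪
  ({q | ∃ j : ℕ, q = (⌊α ^ j⌋ : ℚ) / γ} ∩ Set.Icc 0 (N : ℚ)) ∪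
  {0, (N : ℚ)}

theorem stmt_1 (α : ℚ) (hα : 1 < α) (N γ : ℕ) (hN : 0 < N) (hγ : 0 < γ)
    (m : ℚ) (hm0 : 0 ≤ m) (hmN : m ≤ N) (hgran : ∃ a : ℕ, m = (a : ℚ) / γ) :
    ∃ m' ∈ roundedSet α N γ, m ≤ m' ∧ m' ≤ m * α := by
  have hγ' : (0:ℚ) < γ := by exact_mod_cast hγ
  obtain ⟨a, rfl⟩ := hgran
  rcases Nat.eq_zero_or_pos a with rfl | ha
  · refine ⟨0, ?_, by simp, by simp⟩
    simp [roundedSet]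
  have ha1 : (1:ℚ) ≤ a := by exact_mod_cast ha
  have hex : ∃ j : ℕ, (a:ℚ) - 1 < α ^ j := pow_unbounded_of_one_lt _ hα
  set j := Nat.find hex with hjdef
  have hj : (a:ℚ) - 1 < α ^ j := Nat.find_spec hex
  set c := ⌈α ^ j⌉ with hcdef
  have hcge : (a:ℚ) ≤ c := by
    have h1 : (a:ℚ) - 1 < (c:ℚ) := lt_of_lt_of_le hj (Int.le_ceil _)
    have h2 : (a:ℤ) - 1 < c := by exact_mod_cast h1
    have h3 : (a:ℤ) ≤ c := by omega
    exact_mod_cast h3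
  have hcpos : (0:ℚ) ≤ (c:ℚ) := le_trans (by linarith) hcge
  have hcle : (c:ℚ) ≤ a * α := by
    rcases Nat.eq_zero_or_pos j with hj0 | hjpos
    · have : c = 1 := by rw [hcdef, hj0]; simp
      rw [this]
      push_cast
      nlinarith
    · have hk : ¬ ((a:ℚ) - 1 < α ^ (j-1)) := Nat.find_min hex (Nat.sub_lt hjpos one_pos)
      push_neg at hk
      have hsplit : α ^ j = α ^ (j-1) * α := by
        rw [← pow_succ]
        congr 1
        omega
      have h2 : α ^ j ≤ ((a:ℚ) - 1) * α := by
        rw [hsplit]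
        exact mul_le_mul_of_nonneg_right hk (by linarith)
      have h3 : (c:ℚ) < α ^ j + 1 := Int.ceil_lt_add_one _
      nlinarith
  by_cases hcN : (c:ℚ)/γ ≤ N
  · refine ⟨(c:ℚ)/γ, ?_, ?_, ?_⟩
    · left; left
      exact ⟨⟨j, rfl⟩, by positivity, hcN⟩
    · gcongr
    · rw [div_mul_eq_mul_div]
      gcongr
  · push_neg at hcN
    refine ⟨N, ?_, hmN, ?_⟩
    · right; right; rfl
    · have heq : (a:ℚ)/γ * α = (a*α)/γ := by ring
      rw [heq]
      calc (N:ℚ) ≤ (c:ℚ)/γ := le_of_lt hcN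
        _ ≤ (a*α)/γ := by gcongr
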